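/- Let A be a finite set of k ≥ 2 integers with 0 ∉ A, and let α be an integer with 0 ≤ α ≤ k. Then |Σ_α(A)| ≥ ⌊(k+1)²/4⌋ − α(α+1)/2 + 1. -/

import Mathlib

/-!
Taking complements in `A` turns sums of at least `α` elements into sums of at most
`β = k - α` elements. Split `A` into its positive part `P` and negative part `N`. If `M` is the
largest sum of at most `b` elements of `P`, attained by `B`, then the sums `M + x` with
`x ∈ P \ B` are new sums of at most `b + 1` elements; hence `P` has at least
`1 + p + (p - 1) + ⋯ + (p - b + 1)` such sums for `b ≤ p = |P|`, and `N` likewise by negation.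
Sums from `P` are `≥ 0` and sums from `N` are `≤ 0`, so the two families share only `0`.
Adding the counts for `b = min β |P|` and `b = min β |N|` gives the bound.
-/

/-- `sigmaAtLeast A α` is the set of all subset sums of `A` coming from
subsets of size at least `α`. -/
def sigmaAtLeast (A : Finset ℤ) (α : ℕ) : Finset ℤ :=
  (A.powerset.filter (fun B => α ≤ B.card)).image (fun B => B.sum id)

open Finset Pointwise

def sigmaAtMost (A : Finset ℤ) (b : ℕ) : Finset ℤ :=
  (A.powerset.filter (fun B => B.card ≤ b)).image (fun B => B.sum id)

lemma mem_sigmaAtLeast {A : Finset ℤ} {α : ℕ} {s : ℤ} :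
    s ∈ sigmaAtLeast A α ↔ ∃ B ⊆ A, α ≤ #B ∧ ∑ x ∈ B, x = s := by
  simp [sigmaAtLeast, and_assoc]

lemma mem_sigmaAtMost {A : Finset ℤ} {b : ℕ} {s : ℤ} :
    s ∈ sigmaAtMost A b ↔ ∃ B ⊆ A, #B ≤ b ∧ ∑ x ∈ B, x = s := by
  simp [sigmaAtMost, and_assoc]

lemma zero_mem_sigmaAtMost (A : Finset ℤ) (b : ℕ) : 0 ∈ sigmaAtMost A b :=
  mem_sigmaAtMost.2 ⟨∅, empty_subset _, by simp, by simp⟩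

lemma sigmaAtMost_mono {A A' : Finset ℤ} {b b' : ℕ} (hA : A ⊆ A') (hb : b ≤ b') :
    sigmaAtMost A b ⊆ sigmaAtMost A' b' := by
  intro s hs
  obtain ⟨B, hBA, hBb, rfl⟩ := mem_sigmaAtMost.1 hs
  exact mem_sigmaAtMost.2 ⟨B, hBA.trans hA, hBb.trans hb, rfl⟩

lemma sigmaAtLeast_eq_image_sigmaAtMost {A : Finset ℤ} {α : ℕ} (hα : α ≤ #A) :
    sigmaAtLeast A α = (sigmaAtMost A (#A - α)).image (∑ x ∈ A, x - ·) := by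
  ext s
  simp only [mem_image, mem_sigmaAtLeast, mem_sigmaAtMost]
  constructor
  · rintro ⟨B, hBA, hαB, rfl⟩
    refine ⟨_, ⟨A \ B, sdiff_subset, ?_, rfl⟩, ?_⟩
    · rw [card_sdiff_of_subset hBA]; omega
    · rw [sum_sdiff_eq_sub hBA, sub_sub_cancel]
  · rintro ⟨_, ⟨C, hCA, hCb, rfl⟩, rfl⟩
    refine ⟨A \ C, sdiff_subset, ?_, sum_sdiff_eq_sub hCA⟩
    rw [card_sdiff_of_subset hCA]; omega

lemma card_sigmaAtLeast {A : Finset ℤ} {α : ℕ} (hα : α ≤ #A) :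
    #(sigmaAtLeast A α) = #(sigmaAtMost A (#A - α)) := by
  rw [sigmaAtLeast_eq_image_sigmaAtMost hα, card_image_of_injective _ sub_right_injective]

lemma sigmaAtMost_neg_subset (A : Finset ℤ) (b : ℕ) :
    sigmaAtMost (-A) b ⊆ -sigmaAtMost A b := by
  intro s hs
  obtain ⟨B, hBA, hBb, rfl⟩ := mem_sigmaAtMost.1 hs
  have hB : -B ⊆ A := by simpa using neg_subset_neg hBA
  have hsum : ∑ x ∈ -B, x = -∑ x ∈ B, x := by rw [sum_neg_index]; exact sum_neg_distrib id
  rw [← neg_neg (∑ x ∈ B, x), ← hsum]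
  exact neg_mem_neg (mem_sigmaAtMost.2 ⟨-B, hB, by rwa [card_neg], rfl⟩)

lemma sigmaAtMost_neg (A : Finset ℤ) (b : ℕ) : sigmaAtMost (-A) b = -sigmaAtMost A b :=
  (sigmaAtMost_neg_subset A b).antisymm <| by
    simpa using neg_subset_neg (sigmaAtMost_neg_subset (-A) b)

lemma card_sigmaAtMost_add_le {P : Finset ℤ} (hP : ∀ x ∈ P, 0 < x) (b : ℕ) :
    #(sigmaAtMost P b) + (#P - b) ≤ #(sigmaAtMost P (b + 1)) := by
  have hne : (sigmaAtMost P b).Nonempty := ⟨0, zero_mem_sigmaAtMost P b⟩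
  obtain ⟨B, hBP, hBb, hBM⟩ := mem_sigmaAtMost.1 ((sigmaAtMost P b).max'_mem hne)
  set M := (sigmaAtMost P b).max' hne
  set T := (P \ B).image (· + M)
  have hT : T ⊆ sigmaAtMost P (b + 1) := by
    simp only [T, subset_iff, mem_image, mem_sdiff]
    rintro _ ⟨x, ⟨hxP, hxB⟩, rfl⟩
    refine mem_sigmaAtMost.2 ⟨insert x B, insert_subset hxP hBP, ?_, ?_⟩
    · rw [card_insert_of_notMem hxB]; omega
    · rw [sum_insert hxB, hBM]
  have hdisj : Disjoint (sigmaAtMost P b) T := by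
    simp only [T, disjoint_right, mem_image, mem_sdiff]
    rintro _ ⟨x, ⟨hxP, -⟩, rfl⟩ hx
    linarith [(sigmaAtMost P b).le_max' _ hx, hP x hxP]
  calc #(sigmaAtMost P b) + (#P - b)
      ≤ #(sigmaAtMost P b) + #T := by
        rw [card_image_of_injective _ (add_left_injective M)]
        have := le_card_sdiff B P
        omega
    _ = #(sigmaAtMost P b ∪ T) := (card_union_of_disjoint hdisj).symm
    _ ≤ #(sigmaAtMost P (b + 1)) :=
        card_le_card (union_subset (sigmaAtMost_mono subset_rfl b.le_succ) hT)

lemma two_mul_card_sigmaAtMost_ge {P : Finset ℤ} (hP : ∀ x ∈ P, 0 < x) {b : ℕ}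
    (hb : b ≤ #P) : (b : ℤ) * (2 * #P - b + 1) + 2 ≤ 2 * #(sigmaAtMost P b) := by
  induction b with
  | zero =>
    have := card_pos.2 ⟨0, zero_mem_sigmaAtMost P 0⟩
    omega
  | succ b ih =>
    have hstep := card_sigmaAtMost_add_le hP b
    have ih := ih (by omega)
    zify [show b ≤ #P by omega] at hstep
    push_cast
    nlinarith

lemma two_mul_card_sigmaAtMost_ge_of_neg {N : Finset ℤ} (hN : ∀ x ∈ N, x < 0) {b : ℕ}
    (hb : b ≤ #N) : (b : ℤ) * (2 * #N - b + 1) + 2 ≤ 2 * #(sigmaAtMost N b) := by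
  have hpos : ∀ x ∈ -N, 0 < x := by
    simp only [mem_neg]
    rintro _ ⟨y, hy, rfl⟩
    linarith [hN y hy]
  simpa [sigmaAtMost_neg] using two_mul_card_sigmaAtMost_ge hpos (b := b) (by rwa [card_neg])

lemma card_add_card_sigmaAtMost_le {A P N : Finset ℤ} (hPA : P ⊆ A) (hNA : N ⊆ A)
    (hP : ∀ x ∈ P, 0 < x) (hN : ∀ x ∈ N, x < 0) {b₁ b₂ b : ℕ} (h₁ : b₁ ≤ b) (h₂ : b₂ ≤ b) :
    #(sigmaAtMost P b₁) + #(sigmaAtMost N b₂) ≤ #(sigmaAtMost A b) + 1 := by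
  have hinter : sigmaAtMost P b₁ ∩ sigmaAtMost N b₂ ⊆ {0} := by
    intro s hs
    obtain ⟨hsP, hsN⟩ := mem_inter.1 hs
    obtain ⟨B, hBP, -, rfl⟩ := mem_sigmaAtMost.1 hsP
    obtain ⟨C, hCN, -, hC⟩ := mem_sigmaAtMost.1 hsN
    have : 0 ≤ ∑ x ∈ B, x := sum_nonneg fun x hx => (hP x (hBP hx)).le
    have : ∑ x ∈ C, x ≤ 0 := sum_nonpos fun x hx => (hN x (hCN hx)).le
    rw [mem_singleton]
    linarith
  rw [← card_union_add_card_inter]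
  exact add_le_add
    (card_le_card (union_subset (sigmaAtMost_mono hPA h₁) (sigmaAtMost_mono hNA h₂)))
    ((card_le_card hinter).trans_eq (card_singleton 0))

lemma four_mul_add_ge_of_two_mul_ge {p n k b c cP cN : ℤ} (hp : 0 ≤ p) (hn : 0 ≤ n)
    (hk : p + n = k) (hb₀ : 0 ≤ b) (hb : b ≤ k)
    (hP : min b p * (2 * p - min b p + 1) + 2 ≤ 2 * cP)
    (hN : min b n * (2 * n - min b n + 1) + 2 ≤ 2 * cN) (hc : cP + cN ≤ c + 1) :
    (k + 1) ^ 2 + 3 ≤ 4 * c + 2 * ((k - b) * (k - b + 1)) := by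
  subst hk
  rcases min_cases b p with ⟨hmp, hbp⟩ | ⟨hmp, hbp⟩ <;>
  rcases min_cases b n with ⟨hmn, hbn⟩ | ⟨hmn, hbn⟩ <;>
  simp only [hmp, hmn] at hP hN <;>
  nlinarith [sq_nonneg (p - n), sq_nonneg (p + n - 2 * b)]

theorem four_mul_card_sigmaAtMost_ge {A : Finset ℤ} (h0 : 0 ∉ A) {b : ℕ} (hb : b ≤ #A) :
    ((#A : ℤ) + 1) ^ 2 + 3 ≤ 4 * #(sigmaAtMost A b) + 2 * ((#A - b : ℤ) * (#A - b + 1)) := by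
  set P := A.filter (0 < ·)
  set N := A.filter (· < 0)
  have hP : ∀ x ∈ P, 0 < x := fun x hx => (mem_filter.1 hx).2
  have hN : ∀ x ∈ N, x < 0 := fun x hx => (mem_filter.1 hx).2
  have hPN : #P + #N = #A := by
    rw [← card_union_of_disjoint (disjoint_filter.2 fun x _ h₁ h₂ => by omega), ← filter_or,
      filter_true_of_mem fun x hx => (ne_of_mem_of_not_mem hx h0).lt_or_gt.symm]
  have hc := card_add_card_sigmaAtMost_le (filter_subset _ A) (filter_subset _ A) hP hN
    (min_le_left b #P) (min_le_left b #N)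
  have hcP := two_mul_card_sigmaAtMost_ge hP (min_le_right b #P)
  have hcN := two_mul_card_sigmaAtMost_ge_of_neg hN (min_le_right b #N)
  zify at hc
  rw [Nat.cast_min] at hcP hcN
  exact four_mul_add_ge_of_two_mul_ge (by positivity) (by positivity) (by exact_mod_cast hPN)
    (by positivity) (by exact_mod_cast hb) hcP hcN hc

theorem stmt_11_general (k α : ℕ) (A : Finset ℤ) (hcard : A.card = k)
    (h0 : (0 : ℤ) ∉ A) (hα : α ≤ k) :
    ((sigmaAtLeast A α).card : ℤ) ≥
      ((k : ℤ) + 1) ^ 2 / 4 - (α : ℤ) * ((α : ℤ) + 1) / 2 + 1 := by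
  subst hcard
  have key := four_mul_card_sigmaAtMost_ge h0 (Nat.sub_le #A α)
  rw [show (#A : ℤ) - ↑(#A - α) = α by omega, ← card_sigmaAtLeast hα] at key
  have heven : 2 ∣ (α : ℤ) * (α + 1) := (Int.even_mul_succ_self _).two_dvd
  generalize (α : ℤ) * (α + 1) = t at key heven ⊢
  omega

theorem stmt_11 (k α : ℕ) (hk : 2 ≤ k) (A : Finset ℤ) (hcard : A.card = k)
    (h0 : (0 : ℤ) ∉ A) (hα : α ≤ k) :
    ((sigmaAtLeast A α).card : ℤ) ≥
      ((k : ℤ) + 1) ^ 2 / 4 - (α : ℤ) * ((α : ℤ) + 1) / 2 + 1 :=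
  stmt_11_general k α A hcard h0 hα
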